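/- arXiv:1005.3914 — 2 statements merged into one kernel-verified Lean document; each statement's English description precedes it below -/
import Mathlib

section
/- If H^T is a compact operator, then U(t_1) − e^{-iH_0 t_1 − i v P_1 ∫_0^{t_1} φ(τ)dτ} is a compact operator, and likewise U^*(t_1) − e^{iH_0 t_1 + i v P_1 ∫_0^{t_1} φ(τ)dτ} is compact. -/
/-!
Let `E(t) = exp(-i(t H₀ + v Φ(t) P₁))` with `Φ(t) = ∫₀ᵗ φ`. Since `H₀` and `P₁` commute, `E` solves
the propagator equation with `H^T` switched off, and the interaction picture `W(t) = E(t)⁻¹ U(t)`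
has derivative `-i E(t)⁻¹ H^T U(t)`, a compact operator. The compact operators form a closed
subspace, so a curve whose derivative stays in it moves inside it: `W(t₁) - 1` is compact, hence so
is `U(t₁) - E(t₁) = E(t₁) (W(t₁) - 1)`. For the adjoint run the same argument on `U(t)^* E(t)`,
using that the generator is self-adjoint.
-/

open NormedSpace

theorem Submodule.sub_mem_of_hasDerivAt_mem {E : Type*} [NormedAddCommGroup E] [NormedSpace ℝ E]
    (S : Submodule ℝ E) (hS : IsClosed (S : Set E)) {f f' : ℝ → E}
    (hf : ∀ t, HasDerivAt f (f' t) t) (hf' : ∀ t, f' t ∈ S) (a b : ℝ) : f b - f a ∈ S := by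
  have hq : ∀ t, HasDerivAt (S.mkQL ∘ f) 0 t := fun t => by
    simpa [(Submodule.Quotient.mk_eq_zero S).2 (hf' t)] using
      S.mkQL.hasFDerivAt.comp_hasDerivAt t (hf t)
  have := is_const_of_deriv_eq_zero (fun t => (hq t).differentiableAt) (fun t => (hq t).deriv) b a
  rwa [← Submodule.Quotient.mk_eq_zero, Submodule.Quotient.mk_sub, sub_eq_zero]

theorem isCompactOperator_sub_of_hasDerivAt {X Y : Type*} [NormedAddCommGroup X]
    [NormedSpace ℂ X] [NormedAddCommGroup Y] [NormedSpace ℂ Y] [CompleteSpace Y]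
    {f f' : ℝ → X →L[ℂ] Y} (hf : ∀ t, HasDerivAt f (f' t) t)
    (hf' : ∀ t, IsCompactOperator (f' t)) (a b : ℝ) : IsCompactOperator (f b - f a) :=
  ((compactOperator (RingHom.id ℂ) X Y).restrictScalars ℝ).sub_mem_of_hasDerivAt_mem
    isClosed_setOfPred_isCompactOperator hf hf' a b

theorem IsCompactOperator.mul_mul {X : Type*} [NormedAddCommGroup X] [NormedSpace ℂ X]
    {K : X →L[ℂ] X} (hK : IsCompactOperator K) (A B : X →L[ℂ] X) :
    IsCompactOperator (A * (K * B)) :=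
  (hK.comp_clm B).clm_comp A

section FreeEvolution

variable {𝔸 : Type*} [NormedRing 𝔸] [NormedAlgebra ℂ 𝔸]

theorem Commute.smul_add_smul {B C : 𝔸} (h : Commute B C) (a b c d : ℂ) :
    Commute (a • B + b • C) (c • B + d • C) :=
  ((((Commute.refl B).smul_left a).smul_right c).add_right ((h.smul_left a).smul_right d)).add_left
    (((h.symm.smul_left b).smul_right c).add_right (((Commute.refl C).smul_left b).smul_right d))

theorem hasDerivAt_exp_smul_add_smul [CompleteSpace 𝔸] {B C : 𝔸} (hBC : Commute B C)
    {f g : ℝ → ℂ} {f' g' : ℂ} {t : ℝ} (hf : HasDerivAt f f' t) (hg : HasDerivAt g g' t) :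
    HasDerivAt (fun s => exp (f s • B + g s • C))
      ((f' • B + g' • C) * exp (f t • B + g t • C)) t := by
  let _ : NormedAlgebra ℚ 𝔸 := .restrictScalars ℚ ℂ 𝔸
  have hsplit : ∀ s, exp (f s • B + g s • C) = exp (f s • B) * exp (g s • C) := fun s =>
    exp_add_of_commute ((hBC.smul_left _).smul_right _)
  have hCB : Commute C (exp (f t • B)) := (hBC.symm.smul_right _).exp_right
  rw [funext hsplit, hsplit]
  refine (((hasDerivAt_exp_smul_const' B (f t)).scomp t hf).mul
    ((hasDerivAt_exp_smul_const' C (g t)).scomp t hg)).congr_deriv ?_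
  simp only [Function.comp_apply, add_mul, smul_mul_assoc, mul_smul_comm, mul_assoc,
    hCB.left_comm]

/-- With `B = H₀`, `C = P₁`, `g = v Φ`, this is the propagator without `H^T` for `z = -i`, and
its inverse for `z = i`. -/
noncomputable def freeEvolution (B C : 𝔸) (g : ℝ → ℝ) (z : ℂ) (t : ℝ) : 𝔸 :=
  exp ((z * t) • B + (z * g t) • C)

variable {B C : 𝔸} {g : ℝ → ℝ}

theorem freeEvolution_zero (hg : g 0 = 0) (z : ℂ) : freeEvolution B C g z 0 = 1 := by
  simp [freeEvolution, hg]

variable [CompleteSpace 𝔸]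

theorem freeEvolution_neg_mul (z : ℂ) (t : ℝ) :
    freeEvolution B C g (-z) t * freeEvolution B C g z t = 1 := by
  let _ : NormedAlgebra ℚ 𝔸 := .restrictScalars ℚ ℂ 𝔸
  simp only [freeEvolution, neg_mul, neg_smul, ← neg_add]
  rw [← exp_add_of_commute (Commute.refl _).neg_left, neg_add_cancel, exp_zero]

theorem hasDerivAt_freeEvolution (hBC : Commute B C) {g' : ℝ} {t : ℝ} (hg : HasDerivAt g g' t)
    (z : ℂ) : HasDerivAt (freeEvolution B C g z)
      ((z • B + (z * g') • C) * freeEvolution B C g z t) t := by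
  refine (hasDerivAt_exp_smul_add_smul hBC (((hasDerivAt_id t).ofReal_comp).const_mul z)
    (hg.ofReal_comp.const_mul z)).congr_deriv ?_
  simp only [id, Complex.ofReal_one, mul_one]
  rfl

theorem hasDerivAt_freeEvolution' (hBC : Commute B C) {g' : ℝ} {t : ℝ} (hg : HasDerivAt g g' t)
    (z : ℂ) : HasDerivAt (freeEvolution B C g z)
      (freeEvolution B C g z t * (z • B + (z * g') • C)) t := by
  have hcomm : Commute (z • B + (z * g') • C) (freeEvolution B C g z t) :=
    (hBC.smul_add_smul _ _ _ _).exp_right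
  rw [← hcomm.eq]
  exact hasDerivAt_freeEvolution hBC hg z

end FreeEvolution

section Propagator

variable {g g' : ℝ → ℝ}

theorem isCompactOperator_sub_freeEvolution {X : Type*} [NormedAddCommGroup X] [NormedSpace ℂ X]
    [CompleteSpace X] {B C K : X →L[ℂ] X} {U : ℝ → X →L[ℂ] X} (hBC : Commute B C)
    (hKc : IsCompactOperator K) (hg : ∀ t, HasDerivAt g (g' t) t) (hg0 : g 0 = 0)
    (hU0 : U 0 = 1)
    (hU : ∀ t, HasDerivAt U ((-Complex.I) • ((B + K + (g' t : ℂ) • C) * U t)) t) (t₁ : ℝ) :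
    IsCompactOperator ⇑(U t₁ - freeEvolution B C g (-Complex.I) t₁) := by
  have hinv := freeEvolution_neg_mul (B := B) (C := C) (g := g) Complex.I t₁
  have hE0 := freeEvolution_zero (B := B) (C := C) hg0 Complex.I
  set E := freeEvolution B C g
  have hW := isCompactOperator_sub_of_hasDerivAt (f := fun s => E Complex.I s * U s)
    (fun t => ?_) (fun t => IsCompactOperator.mul_mul (K := (-Complex.I) • K) (hKc.smul _)
      (E Complex.I t) (U t)) 0 t₁
  · rw [hE0, hU0, one_mul] at hW
    rw [show U t₁ - E (-Complex.I) t₁ = E (-Complex.I) t₁ * (E Complex.I t₁ * U t₁ - 1) by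
      rw [mul_sub, ← mul_assoc, hinv, one_mul, mul_one]]
    exact hW.clm_comp _
  refine ((hasDerivAt_freeEvolution' hBC (hg t) _).mul (hU t)).congr_deriv ?_
  rw [mul_assoc, ← mul_add]
  congr 1
  simp only [add_mul, smul_mul_assoc, smul_add]
  module

theorem isCompactOperator_star_sub_freeEvolution {H : Type*} [NormedAddCommGroup H]
    [InnerProductSpace ℂ H] [CompleteSpace H] {B C K : H →L[ℂ] H} {U : ℝ → H →L[ℂ] H}
    (hB : IsSelfAdjoint B) (hC : IsSelfAdjoint C) (hK : IsSelfAdjoint K) (hBC : Commute B C)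
    (hKc : IsCompactOperator K) (hg : ∀ t, HasDerivAt g (g' t) t) (hg0 : g 0 = 0)
    (hU0 : U 0 = 1)
    (hU : ∀ t, HasDerivAt U ((-Complex.I) • ((B + K + (g' t : ℂ) • C) * U t)) t) (t₁ : ℝ) :
    IsCompactOperator ⇑(star (U t₁) - freeEvolution B C g Complex.I t₁) := by
  have hinv := freeEvolution_neg_mul (B := B) (C := C) (g := g) Complex.I t₁
  have hE0 := freeEvolution_zero (B := B) (C := C) hg0 (-Complex.I)
  set E := freeEvolution B C g
  have hM := isCompactOperator_sub_of_hasDerivAt (f := fun s => star (U s) * E (-Complex.I) s)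
    (fun t => ?_) (fun t => IsCompactOperator.mul_mul (K := Complex.I • K) (hKc.smul _)
      (star (U t)) (E (-Complex.I) t)) 0 t₁
  · rw [hE0, hU0, star_one, one_mul] at hM
    rw [show star (U t₁) - E Complex.I t₁ = (star (U t₁) * E (-Complex.I) t₁ - 1) * E Complex.I t₁
      by rw [sub_mul, mul_assoc, hinv, one_mul, mul_one]]
    exact hM.comp_clm _
  have hgen : IsSelfAdjoint (B + K + (g' t : ℂ) • C) :=
    (hB.add hK).add (.smul (Complex.conj_ofReal _) hC)
  refine ((hU t).star.mul (hasDerivAt_freeEvolution hBC (hg t) _)).congr_deriv ?_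
  rw [star_smul, star_mul, hgen.star_eq]
  simp only [Complex.star_def, map_neg, Complex.conj_I, neg_neg, mul_add, add_mul,
    smul_mul_assoc, mul_smul_comm, smul_add, mul_assoc]
  module

end Propagator

theorem propagator_compact_difference_general
    {ℋ : Type*} [NormedAddCommGroup ℋ] [InnerProductSpace ℂ ℋ] [CompleteSpace ℋ]
    (H₀ HT P₁ : ℋ →L[ℂ] ℋ)
    (hH₀ : IsSelfAdjoint H₀) (hHT : IsSelfAdjoint HT)
    (hHTcompact : IsCompactOperator (⇑HT))
    (hP₁ : IsSelfAdjoint P₁ ∧ IsIdempotentElem P₁)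
    (hcomm : H₀ * P₁ = P₁ * H₀)
    (v : ℝ) (φ : ℝ → ℝ) (hφ : Continuous φ)
    (t₁ : ℝ)
    (U : ℝ → (ℋ →L[ℂ] ℋ))
    (hU0 : U 0 = 1)
    (hU : ∀ t : ℝ, HasDerivAt U ((-Complex.I) • ((H₀ + HT + ((v * φ t : ℝ) : ℂ) • P₁) * U t)) t) :
    IsCompactOperator
        (⇑(U t₁ - NormedSpace.exp ((-Complex.I * (t₁ : ℂ)) • H₀
            + (-Complex.I * ((v * ∫ τ in (0:ℝ)..t₁, φ τ : ℝ) : ℂ)) • P₁)))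
    ∧ IsCompactOperator
        (⇑(ContinuousLinearMap.adjoint (U t₁) - NormedSpace.exp ((Complex.I * (t₁ : ℂ)) • H₀
            + (Complex.I * ((v * ∫ τ in (0:ℝ)..t₁, φ τ : ℝ) : ℂ)) • P₁))) := by
  set g : ℝ → ℝ := fun t => v * ∫ τ in (0:ℝ)..t, φ τ
  have hg : ∀ t, HasDerivAt g (v * φ t) t := fun t =>
    (hφ.integral_hasStrictDerivAt 0 t).hasDerivAt.const_mul v
  have hg0 : g 0 = 0 := by simp [g]
  rw [← ContinuousLinearMap.star_eq_adjoint]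
  exact ⟨isCompactOperator_sub_freeEvolution hcomm hHTcompact hg hg0 hU0 hU t₁,
    isCompactOperator_star_sub_freeEvolution hH₀ hP₁.1 hHT hcomm hHTcompact hg hg0 hU0 hU t₁⟩

/-- If `H^T` is a compact operator, then
`U(t₁) − e^{-iH₀t₁ − ivP₁∫₀^{t₁}φ}` is compact, and likewise
`U^*(t₁) − e^{iH₀t₁ + ivP₁∫₀^{t₁}φ}` is compact.  Here `H₀` is bounded self-adjoint and
commutes with the orthogonal projection `P₁`, `H^T` is compact self-adjoint, `φ` is
continuous, and `U` is the propagator solving `i∂ₜU(t) = (H₀ + H^T + vφ(t)P₁)U(t)`,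
`U(0) = I`. -/
theorem propagator_compact_difference
    {ℋ : Type*} [NormedAddCommGroup ℋ] [InnerProductSpace ℂ ℋ] [CompleteSpace ℋ]
    (H₀ HT P₁ : ℋ →L[ℂ] ℋ)
    (hH₀ : IsSelfAdjoint H₀) (hHT : IsSelfAdjoint HT)
    (hHTcompact : IsCompactOperator (⇑HT))
    (hP₁ : IsSelfAdjoint P₁ ∧ IsIdempotentElem P₁)
    (hcomm : H₀ * P₁ = P₁ * H₀)
    (v : ℝ) (φ : ℝ → ℝ) (hφ : Continuous φ)
    (t₁ : ℝ) (ht₁ : 0 < t₁)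
    (U : ℝ → (ℋ →L[ℂ] ℋ))
    (hU0 : U 0 = 1)
    (hU : ∀ t : ℝ, HasDerivAt U ((-Complex.I) • ((H₀ + HT + ((v * φ t : ℝ) : ℂ) • P₁) * U t)) t) :
    IsCompactOperator
        (⇑(U t₁ - NormedSpace.exp ((-Complex.I * (t₁ : ℂ)) • H₀
            + (-Complex.I * ((v * ∫ τ in (0:ℝ)..t₁, φ τ : ℝ) : ℂ)) • P₁)))
    ∧ IsCompactOperator
        (⇑(ContinuousLinearMap.adjoint (U t₁) - NormedSpace.exp ((Complex.I * (t₁ : ℂ)) • H₀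
            + (Complex.I * ((v * ∫ τ in (0:ℝ)..t₁, φ τ : ℝ) : ℂ)) • P₁))) :=
  propagator_compact_difference_general H₀ HT P₁ hH₀ hHT hHTcompact hP₁ hcomm v φ hφ t₁ U hU0 hU
end

section
/- Vanishing of matrix elements across large distance: let H be a bounded self-adjoint operator and P, Q orthogonal projections such that P H^k Q_n = 0 for all n > k, where (Q_n) is a family of projections. Then for any continuous function g and any t, lim_{n→∞} ‖P g(H) e^{itH} Q_n‖ = 0. -/
open Filter

/-! Every operator in the norm-closed algebra generated by `H` is a norm limit of polynomials
`p(H)`, and both `g(H)` and `e^{itH}` are functions of `H`, hence lie there.  For a polynomial of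
degree `d` the hypothesis kills `P p(H) Qₙ` once `n > d`, and since `‖P‖, ‖Qₙ‖ ≤ 1` the matrix
element `P A Qₙ` is then bounded by the approximation error `‖A - p(H)‖`. -/

open Polynomial Topology

theorem Polynomial.mul_aeval_mul_eq_zero {R A : Type*} [CommSemiring R] [Semiring A]
    [Algebra R A] {a P Q : A} {n : ℕ} (h : ∀ k < n, P * a ^ k * Q = 0) {p : R[X]}
    (hp : p.natDegree < n) : P * aeval a p * Q = 0 := by
  rw [aeval_eq_sum_range, Finset.mul_sum, Finset.sum_mul]
  refine Finset.sum_eq_zero fun k hk => ?_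
  rw [mul_smul_comm, smul_mul_assoc, h k (by grind), smul_zero]

theorem IsSelfAdjoint.coe_elemental_eq_closure_range_aeval {R A : Type*} [CommSemiring R]
    [StarRing R] [TopologicalSpace A] [Semiring A] [StarRing A] [IsSemitopologicalSemiring A]
    [ContinuousStar A] [Algebra R A] [StarModule R A] {a : A} (ha : IsSelfAdjoint a) :
    (StarAlgebra.elemental R a : Set A) = closure (Set.range (aeval (R := R) a)) := by
  rw [StarAlgebra.elemental, StarSubalgebra.topologicalClosure_coe,
    ← StarSubalgebra.coe_toSubalgebra, StarAlgebra.adjoin_toSubalgebra, Set.star_singleton,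
    ha.star_eq, Set.union_self, Algebra.adjoin_singleton_eq_range_aeval]
  rfl

theorem cfc_exp_const_mul_eq_exp_smul {A : Type*} [CStarAlgebra A] (c : ℂ) (a : A)
    [IsStarNormal a] : cfc (fun z => Complex.exp (c * z)) a = NormedSpace.exp (c • a) := by
  rw [cfc_comp_const_mul c Complex.exp a, CFC.complex_exp_eq_normedSpace_exp]

theorem tendsto_norm_mul_mul_atTop_of_mem_closure_range_aeval {𝕜 A : Type*} [NormedField 𝕜]
    [NormedRing A] [NormedAlgebra 𝕜 A] {a x P : A} {Q : ℕ → A}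
    (hx : x ∈ closure (Set.range (aeval (R := 𝕜) a))) (hP : ‖P‖ ≤ 1) (hQ : ∀ n, ‖Q n‖ ≤ 1)
    (h : ∀ k n, k < n → P * a ^ k * Q n = 0) :
    Tendsto (fun n => ‖P * x * Q n‖) atTop (𝓝 0) := by
  refine Metric.tendsto_atTop.2 fun ε hε => ?_
  obtain ⟨_, ⟨p, rfl⟩, hxp⟩ := Metric.mem_closure_iff.1 hx ε hε
  refine ⟨p.natDegree + 1, fun n hn => ?_⟩
  have hpoly : P * aeval a p * Q n = 0 :=
    mul_aeval_mul_eq_zero (fun k hk => h k n hk) (by omega)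
  calc dist ‖P * x * Q n‖ 0 = ‖P * (x - aeval a p) * Q n‖ := by
        rw [mul_sub, sub_mul, hpoly, sub_zero, dist_zero_right, norm_norm]
    _ ≤ ‖P‖ * ‖x - aeval a p‖ * ‖Q n‖ := norm_mul₃_le
    _ ≤ 1 * ‖x - aeval a p‖ * 1 := by have := hQ n; gcongr
    _ < ε := by rwa [one_mul, mul_one, ← dist_eq_norm]

theorem matrix_elements_vanish_far_away_general
    {ℋ : Type*} [NormedAddCommGroup ℋ] [InnerProductSpace ℂ ℋ] [CompleteSpace ℋ]
    (H P : ℋ →L[ℂ] ℋ) (Q : ℕ → (ℋ →L[ℂ] ℋ))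
    (hH : IsSelfAdjoint H)
    (hP : IsSelfAdjoint P ∧ IsIdempotentElem P)
    (hQ : ∀ n, IsSelfAdjoint (Q n) ∧ IsIdempotentElem (Q n))
    (hstruct : ∀ k n : ℕ, k < n → P * H ^ k * Q n = 0)
    (g : ℂ → ℂ) (t : ℝ) :
    Tendsto
      (fun n : ℕ => ‖P * (cfc g H * NormedSpace.exp ((Complex.I * (t : ℂ)) • H)) * Q n‖)
      atTop (nhds 0) := by
  have hHnormal : IsStarNormal H := hH.isStarNormal
  have hgH : cfc g H ∈ (StarAlgebra.elemental ℂ H : Set _) := range_cfc_subset ℂ hHnormal ⟨g, rfl⟩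
  have hexp : NormedSpace.exp ((Complex.I * (t : ℂ)) • H) ∈ (StarAlgebra.elemental ℂ H : Set _) :=
    range_cfc_subset ℂ hHnormal ⟨_, cfc_exp_const_mul_eq_exp_smul _ H⟩
  refine tendsto_norm_mul_mul_atTop_of_mem_closure_range_aeval (𝕜 := ℂ) ?_
    (IsStarProjection.norm_le P ⟨hP.2, hP.1⟩)
    (fun n => IsStarProjection.norm_le _ ⟨(hQ n).2, (hQ n).1⟩) hstruct
  rw [← hH.coe_elemental_eq_closure_range_aeval]
  exact mul_mem hgH hexp

/-- Vanishing of matrix elements across large distance: let `H` be a bounded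
self-adjoint operator and `P`, `Qₙ` orthogonal projections such that `P H^k Qₙ = 0` for all
`n > k`.  Then for any continuous function `g` and any `t`,
`lim_{n→∞} ‖P g(H) e^{itH} Qₙ‖ = 0`. -/
theorem matrix_elements_vanish_far_away
    {ℋ : Type*} [NormedAddCommGroup ℋ] [InnerProductSpace ℂ ℋ] [CompleteSpace ℋ]
    (H P : ℋ →L[ℂ] ℋ) (Q : ℕ → (ℋ →L[ℂ] ℋ))
    (hH : IsSelfAdjoint H)
    (hP : IsSelfAdjoint P ∧ IsIdempotentElem P)
    (hQ : ∀ n, IsSelfAdjoint (Q n) ∧ IsIdempotentElem (Q n))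
    (hstruct : ∀ k n : ℕ, k < n → P * H ^ k * Q n = 0)
    (g : ℂ → ℂ) (hg : Continuous g) (t : ℝ) :
    Tendsto
      (fun n : ℕ => ‖P * (cfc g H * NormedSpace.exp ((Complex.I * (t : ℂ)) • H)) * Q n‖)
      atTop (nhds 0) :=
  matrix_elements_vanish_far_away_general H P Q hH hP hQ hstruct g t
end
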